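/- Every natural number n can be written as 4x² + 2·t_y + t_z for some integers x, y, z, where t_k = k(k+1)/2. -/

import Mathlib

/-!
Since `2 * tri k = k ^ 2 + k`, we have
`8 * (4 x² + 2 tri y + tri z) + 3 = (2y + 1 + 4x)² + (2y + 1 - 4x)² + (2z + 1)²`,
so it suffices to write `8n + 3` as `a² + b² + c²` with `a ≡ b (mod 8)`. Any representation as a
sum of three squares will do after permuting and changing signs: `a, b, c` are all odd, and the
odd residues mod 8 fall into the two classes `±1` and `±3`.

That `N ≡ 3 (mod 8)` is a sum of three squares is Dirichlet's argument. Choose a prime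
`p ≡ 1 (mod 4)` with `N ∣ 2p + 1` (by Dirichlet's theorem on primes in progressions); then `-N` is
a square mod `p` by quadratic reciprocity, and this yields a positive definite integral ternary
form of determinant 1 with first coefficient `N`. Such a form only represents sums of three
squares: completing the square against the first coefficient `a` leaves a binary form of
determinant `a`, and Hermite's bound for that binary form gives a vector of value `< a` unless
`a = 1`. Changing basis to put that vector first and descending on `a` gives `a = 1`, and then
the form is `(x + …)² + ` a binary form of determinant 1, which is a sum of two squares by the
same argument in dimension two.
-/

def tri (k : ℤ) : ℤ := k * (k + 1) / 2

open Matrix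

namespace Matrix

variable {n R : Type*} [Fintype n] [CommRing R]

lemma dotProduct_transpose_mul_mul_mulVec (A P : Matrix n n R) (v : n → R) :
    v ⬝ᵥ (Pᵀ * A * P) *ᵥ v = (P *ᵥ v) ⬝ᵥ A *ᵥ (P *ᵥ v) := by
  rw [← mulVec_mulVec, ← mulVec_mulVec, dotProduct_mulVec, vecMul_transpose]

lemma transpose_mul_mul_apply_self (A P : Matrix n n R) (i : n) :
    (Pᵀ * A * P) i i = (fun k ↦ P k i) ⬝ᵥ A *ᵥ (fun k ↦ P k i) := by
  simp only [mul_apply, transpose_apply, dotProduct, mulVec, Finset.mul_sum, Finset.sum_mul]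
  rw [Finset.sum_comm]
  exact Finset.sum_congr rfl fun _ _ ↦ Finset.sum_congr rfl fun _ _ ↦ by ring

variable [DecidableEq n] {A P : Matrix n n R}

lemma det_transpose_mul_mul_of_det_eq_one (hP : P.det = 1) : (Pᵀ * A * P).det = A.det := by
  simp [hP]

lemma exists_dotProduct_transpose_mul_mul_mulVec_eq (hP : P.det = 1) (v : n → R) :
    ∃ w, w ⬝ᵥ (Pᵀ * A * P) *ᵥ w = v ⬝ᵥ A *ᵥ v :=
  ⟨P⁻¹ *ᵥ v, by
    rw [dotProduct_transpose_mul_mul_mulVec, mulVec_mulVec, mul_nonsing_inv _ (by simp [hP]),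
      one_mulVec]⟩

lemma PosDef.transpose_mul_mul_of_det_eq_one [PartialOrder R] [StarRing R] [TrivialStar R]
    (hA : A.PosDef) (hP : P.det = 1) : (Pᵀ * A * P).PosDef := by
  simpa using hA.conjTranspose_mul_mul_same
    (mulVec_injective_of_det_mem_nonZeroDivisors (hP ▸ one_mem _))

end Matrix

lemma Int.exists_four_mul_sq_le (t : ℤ) {a : ℤ} (ha : 0 < a) :
    ∃ x, 4 * (a * x + t) ^ 2 ≤ a ^ 2 := by
  refine ⟨-((2 * t + a) / (2 * a)), ?_⟩
  have h₀ := Int.emod_nonneg (2 * t + a) (by positivity : 2 * a ≠ 0)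
  have h₁ := Int.emod_lt_of_pos (2 * t + a) (by positivity : 0 < 2 * a)
  rw [Int.emod_def] at h₀ h₁
  nlinarith

section Binary

variable {B : Matrix (Fin 2) (Fin 2) ℤ}

lemma dotProduct_mulVec_fin_two (hB : B.IsHermitian) (v : Fin 2 → ℤ) :
    v ⬝ᵥ B *ᵥ v = B 0 0 * v 0 ^ 2 + 2 * B 0 1 * v 0 * v 1 + B 1 1 * v 1 ^ 2 := by
  simp [dotProduct, mulVec, Fin.sum_univ_two, (isHermitian_iff_isSymm.mp hB).apply 0 1]
  ring

lemma mul_dotProduct_mulVec_fin_two (hB : B.IsHermitian) (v : Fin 2 → ℤ) :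
    B 0 0 * (v ⬝ᵥ B *ᵥ v) = (B 0 0 * v 0 + B 0 1 * v 1) ^ 2 + B.det * v 1 ^ 2 := by
  rw [dotProduct_mulVec_fin_two hB, det_fin_two, (isHermitian_iff_isSymm.mp hB).apply 0 1]
  ring

lemma posDef_fin_two (hB : B.IsHermitian) (h₀ : 0 < B 0 0) (hdet : 0 < B.det) : B.PosDef := by
  refine PosDef.of_dotProduct_mulVec_pos hB fun v hv ↦ pos_of_mul_pos_right ?_ h₀.le
  rw [star_trivial, mul_dotProduct_mulVec_fin_two hB]
  by_cases h₁ : v 1 = 0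
  · have h₀ : v 0 ≠ 0 := fun h ↦ hv (funext fun i ↦ by fin_cases i <;> simp [h, h₁])
    simp [h₁]
    positivity
  · positivity

/-- Hermite's bound in dimension two, attained at a primitive vector. -/
theorem exists_isCoprime_three_mul_sq_le (B : Matrix (Fin 2) (Fin 2) ℤ) (hB : B.PosDef) :
    ∃ v : Fin 2 → ℤ, IsCoprime (v 0) (v 1) ∧ 3 * (v ⬝ᵥ B *ᵥ v) ^ 2 ≤ 4 * B.det := by
  induction h : (B 0 0).toNat using Nat.strong_induction_on generalizing B with
  | _ k ih =>
  have ha : 0 < B 0 0 := hB.diag_pos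
  by_cases hsmall : 3 * B 0 0 ^ 2 ≤ 4 * B.det
  · exact ⟨![1, 0], isCoprime_one_left, by simpa [dotProduct_mulVec_fin_two hB.1] using hsmall⟩
  obtain ⟨y, hy⟩ := Int.exists_four_mul_sq_le (B 0 1) ha
  set P : Matrix (Fin 2) (Fin 2) ℤ := !![y, -1; 1, 0]
  have hP : P.det = 1 := by simp [P, det_fin_two]
  have hlt : (Pᵀ * B * P) 0 0 < B 0 0 := by
    have key : B 0 0 * (Pᵀ * B * P) 0 0 = (B 0 0 * y + B 0 1) ^ 2 + B.det := by
      rw [transpose_mul_mul_apply_self, mul_dotProduct_mulVec_fin_two hB.1]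
      simp [P]
    nlinarith
  obtain ⟨w, ⟨α, β, hαβ⟩, hw⟩ :=
    ih _ (by omega) _ (hB.transpose_mul_mul_of_det_eq_one hP) rfl
  refine ⟨P *ᵥ w, ⟨-β, α + β * y, ?_⟩, ?_⟩
  · simp [P, mulVec, dotProduct, Fin.sum_univ_two]
    linear_combination hαβ
  · rwa [← dotProduct_transpose_mul_mul_mulVec, ← det_transpose_mul_mul_of_det_eq_one hP]

theorem exists_sq_add_sq_of_det_eq_one {B : Matrix (Fin 2) (Fin 2) ℤ} (hB : B.PosDef)
    (hdet : B.det = 1) (v : Fin 2 → ℤ) : ∃ s t : ℤ, v ⬝ᵥ B *ᵥ v = s ^ 2 + t ^ 2 := by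
  obtain ⟨w, ⟨α, β, hαβ⟩, hw⟩ := exists_isCoprime_three_mul_sq_le B hB
  have hw₀ : w ≠ 0 := fun h ↦ by simp [h] at hαβ
  have hQ : w ⬝ᵥ B *ᵥ w = 1 := by
    have := hB.dotProduct_mulVec_pos hw₀
    rw [star_trivial] at this
    nlinarith
  set P : Matrix (Fin 2) (Fin 2) ℤ := !![w 0, -β; w 1, α]
  have hP : P.det = 1 := by
    simp [P, det_fin_two]
    linear_combination hαβ
  have h₀₀ : (Pᵀ * B * P) 0 0 = 1 := by
    rw [transpose_mul_mul_apply_self, ← hQ]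
    congr <;> ext i <;> fin_cases i <;> rfl
  obtain ⟨u, hu⟩ := exists_dotProduct_transpose_mul_mul_mulVec_eq (A := B) hP v
  have key := mul_dotProduct_mulVec_fin_two (hB.transpose_mul_mul_of_det_eq_one hP).1 u
  rw [h₀₀, det_transpose_mul_mul_of_det_eq_one hP, hdet, hu] at key
  exact ⟨u 0 + (Pᵀ * B * P) 0 1 * u 1, u 1, by linear_combination key⟩

end Binary

section Ternary

variable {A : Matrix (Fin 3) (Fin 3) ℤ}

/-- `A 0 0` times the Schur complement of the entry `A 0 0`; the factor keeps it integral. -/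
def scaledSchur (A : Matrix (Fin 3) (Fin 3) ℤ) : Matrix (Fin 2) (Fin 2) ℤ :=
  !![A 0 0 * A 1 1 - A 0 1 ^ 2, A 0 0 * A 1 2 - A 0 1 * A 0 2;
     A 0 0 * A 1 2 - A 0 1 * A 0 2, A 0 0 * A 2 2 - A 0 2 ^ 2]

lemma isHermitian_scaledSchur : (scaledSchur A).IsHermitian := by
  ext i j
  fin_cases i <;> fin_cases j <;> simp [scaledSchur]

lemma det_scaledSchur (hA : A.IsHermitian) : (scaledSchur A).det = A 0 0 * A.det := by
  have hA' := isHermitian_iff_isSymm.mp hA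
  simp [scaledSchur, det_fin_two, det_fin_three, hA'.apply 0 1, hA'.apply 0 2, hA'.apply 1 2]
  ring

lemma mul_dotProduct_mulVec_fin_three (hA : A.IsHermitian) (v : Fin 3 → ℤ) :
    A 0 0 * (v ⬝ᵥ A *ᵥ v) = (A 0 0 * v 0 + A 0 1 * v 1 + A 0 2 * v 2) ^ 2 +
      ![v 1, v 2] ⬝ᵥ scaledSchur A *ᵥ ![v 1, v 2] := by
  have hA' := isHermitian_iff_isSymm.mp hA
  rw [dotProduct_mulVec_fin_two isHermitian_scaledSchur]
  simp [scaledSchur, dotProduct, mulVec, Fin.sum_univ_three, hA'.apply 0 1, hA'.apply 0 2,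
    hA'.apply 1 2]
  ring

lemma posDef_scaledSchur (hA : A.PosDef) : (scaledSchur A).PosDef := by
  refine PosDef.of_dotProduct_mulVec_pos isHermitian_scaledSchur fun w hw ↦ ?_
  have ha : 0 < A 0 0 := hA.diag_pos
  set v : Fin 3 → ℤ := ![-(A 0 1 * w 0 + A 0 2 * w 1), A 0 0 * w 0, A 0 0 * w 1]
  have hv : v ≠ 0 := fun h ↦ hw (funext fun i ↦ by
    have h₁ := congrFun h 1
    have h₂ := congrFun h 2
    simp [v, ha.ne'] at h₁ h₂
    fin_cases i <;> simp [h₁, h₂])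
  have key : A 0 0 * (v ⬝ᵥ A *ᵥ v) = A 0 0 ^ 2 * (w ⬝ᵥ scaledSchur A *ᵥ w) := by
    rw [mul_dotProduct_mulVec_fin_three hA.1, dotProduct_mulVec_fin_two isHermitian_scaledSchur,
      dotProduct_mulVec_fin_two isHermitian_scaledSchur]
    simp [v]
    ring
  have hpos := hA.dotProduct_mulVec_pos hv
  rw [star_trivial] at hpos ⊢
  exact pos_of_mul_pos_right (key ▸ mul_pos ha hpos) (sq_nonneg _)

lemma posDef_fin_three (hA : A.IsHermitian) (h₀ : 0 < A 0 0)
    (h₁ : 0 < A 0 0 * A 1 1 - A 0 1 ^ 2) (hdet : 0 < A.det) : A.PosDef := by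
  have hB : (scaledSchur A).PosDef :=
    posDef_fin_two isHermitian_scaledSchur h₁ (by rw [det_scaledSchur hA]; positivity)
  refine PosDef.of_dotProduct_mulVec_pos hA fun v hv ↦ pos_of_mul_pos_right ?_ h₀.le
  rw [star_trivial, mul_dotProduct_mulVec_fin_three hA]
  by_cases h : v 1 = 0 ∧ v 2 = 0
  · have h₀ : v 0 ≠ 0 := fun h' ↦ hv (funext fun i ↦ by fin_cases i <;> simp [h', h.1, h.2])
    simp [h.1, h.2]
    positivity
  · have := hB.dotProduct_mulVec_pos (x := ![v 1, v 2]) fun h' ↦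
      h ⟨by simpa using congrFun h' 0, by simpa using congrFun h' 1⟩
    rw [star_trivial] at this
    positivity

theorem exists_sq_add_sq_add_sq_of_det_eq_one (A : Matrix (Fin 3) (Fin 3) ℤ) (hA : A.PosDef)
    (hdet : A.det = 1) (v : Fin 3 → ℤ) : ∃ r s t : ℤ, v ⬝ᵥ A *ᵥ v = r ^ 2 + s ^ 2 + t ^ 2 := by
  induction h : (A 0 0).toNat using Nat.strong_induction_on generalizing A v with
  | _ k ih =>
  have ha : 0 < A 0 0 := hA.diag_pos
  have hB := posDef_scaledSchur hA
  have hBdet : (scaledSchur A).det = A 0 0 := by rw [det_scaledSchur hA.1, hdet, mul_one]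
  obtain ha₁ | ha₂ : A 0 0 = 1 ∨ 2 ≤ A 0 0 := by omega
  · obtain ⟨s, t, hst⟩ := exists_sq_add_sq_of_det_eq_one hB (hBdet.trans ha₁) ![v 1, v 2]
    have key := mul_dotProduct_mulVec_fin_three hA.1 v
    rw [ha₁, hst] at key
    exact ⟨v 0 + A 0 1 * v 1 + A 0 2 * v 2, s, t, by linear_combination key⟩
  obtain ⟨w, ⟨α, β, hαβ⟩, hw⟩ := exists_isCoprime_three_mul_sq_le _ hB
  obtain ⟨x, hx⟩ := Int.exists_four_mul_sq_le (A 0 1 * w 0 + A 0 2 * w 1) ha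
  set P : Matrix (Fin 3) (Fin 3) ℤ := !![x, 0, 1; w 0, -β, 0; w 1, α, 0]
  have hP : P.det = 1 := by
    simp [P, det_fin_three]
    linear_combination hαβ
  have hlt : (Pᵀ * A * P) 0 0 < A 0 0 := by
    have hw₀ : w ≠ 0 := fun h ↦ by simp [h] at hαβ
    have hG := hB.dotProduct_mulVec_pos hw₀
    rw [star_trivial] at hG
    rw [hBdet] at hw
    have hcol : ![P 1 0, P 2 0] = w := by ext i; fin_cases i <;> rfl
    have key : A 0 0 * (Pᵀ * A * P) 0 0 =
        (A 0 0 * x + A 0 1 * w 0 + A 0 2 * w 1) ^ 2 + w ⬝ᵥ scaledSchur A *ᵥ w := by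
      rw [transpose_mul_mul_apply_self, mul_dotProduct_mulVec_fin_three hA.1, hcol]
      rfl
    have h4G : 4 * (w ⬝ᵥ scaledSchur A *ᵥ w) < 3 * A 0 0 ^ 2 := by nlinarith
    nlinarith
  obtain ⟨u, hu⟩ := exists_dotProduct_transpose_mul_mul_mulVec_eq (A := A) hP v
  rw [← hu]
  exact ih _ (by omega) _ (hA.transpose_mul_mul_of_det_eq_one hP)
    (by rw [det_transpose_mul_mul_of_det_eq_one hP, hdet]) u rfl

end Ternary

lemma exists_prime_mod_four_eq_one_dvd_two_mul_add_one {N : ℕ} (hN : N % 8 = 3) :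
    ∃ p : ℕ, p.Prime ∧ p % 4 = 1 ∧ N ∣ 2 * p + 1 := by
  obtain ⟨n, rfl⟩ : ∃ n, N = 8 * n + 3 := ⟨N / 8, by omega⟩
  have hcop : Nat.Coprime (4 * n + 1) (4 * (8 * n + 3)) :=
    Nat.isCoprime_iff_coprime.mp ⟨8 * n + 1, -n, by push_cast; ring⟩
  obtain ⟨p, -, hp, hpa⟩ :=
    Nat.forall_exists_prime_gt_and_eq_mod ((ZMod.isUnit_iff_coprime _ _).mpr hcop) 0
  have hmod : p ≡ 4 * n + 1 [MOD 4 * (8 * n + 3)] := (ZMod.natCast_eq_natCast_iff _ _ _).mp hpa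
  refine ⟨p, hp, ?_, ?_⟩
  · have := hmod.of_mul_right (8 * n + 3)
    unfold Nat.ModEq at this
    omega
  · refine Nat.modEq_zero_iff_dvd.mp (((hmod.of_mul_left 4).mul_left 2).add_right 1 |>.trans ?_)
    simp [Nat.ModEq]
    ring_nf
    simp

lemma isSquare_neg_of_dvd_two_mul_add_one {p N : ℕ} [Fact p.Prime] (hp : p % 4 = 1)
    (hN : N % 8 = 3) (hdvd : N ∣ 2 * p + 1) : IsSquare ((-N : ℤ) : ZMod p) := by
  apply ZMod.isSquare_of_jacobiSym_eq_one
  have hNodd : Odd N := Nat.odd_iff.mpr (by omega)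
  have hpN : jacobiSym p N = 1 := by
    have h : jacobiSym (-2 * p) N = jacobiSym 1 N :=
      jacobiSym.mod_left' <| Int.modEq_iff_dvd.mpr <| by
        rw [show (1 : ℤ) - -2 * p = (2 * p + 1 : ℕ) by push_cast; ring]
        exact_mod_cast hdvd
    rw [jacobiSym.mul_left, jacobiSym.at_neg_two hNodd, ZMod.χ₈'_nat_eq_if_mod_eight,
      jacobiSym.one_left] at h
    simpa [hN, show N % 2 = 1 by omega] using h
  rw [neg_eq_neg_one_mul, jacobiSym.mul_left, jacobiSym.at_neg_one (Nat.odd_iff.mpr (by omega)),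
    ZMod.χ₄_nat_one_mod_four hp, ← jacobiSym.quadratic_reciprocity_one_mod_four hp hNodd, hpN]
  norm_num

lemma exists_sq_add_eq_two_mul_mul {p : ℕ} [Fact p.Prime] (hp : p % 4 = 1) {N : ℕ} (hN : Odd N)
    (hsq : IsSquare ((-N : ℤ) : ZMod p)) : ∃ s m : ℤ, s ^ 2 + N = 2 * p * m := by
  obtain ⟨r, hr⟩ := hsq
  obtain ⟨s₀, rfl⟩ := ZMod.intCast_surjective r
  have hp₀ : (p : ℤ) ∣ s₀ ^ 2 + N := by
    rw [← ZMod.intCast_zmod_eq_zero_iff_dvd]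
    push_cast at hr ⊢
    linear_combination -hr
  have hpodd : Odd (p : ℤ) := by exact_mod_cast Nat.odd_iff.mpr (by omega)
  obtain ⟨s, hs, hps⟩ : ∃ s : ℤ, Odd s ∧ (p : ℤ) ∣ s ^ 2 + N := by
    rcases Int.even_or_odd s₀ with h | h
    · obtain ⟨c, hc⟩ := hp₀
      exact ⟨s₀ + p, h.add_odd hpodd, c + 2 * s₀ + p, by linear_combination hc⟩
    · exact ⟨s₀, h, hp₀⟩
  have h₂ : (2 : ℤ) ∣ s ^ 2 + N := (hs.pow.add_odd (by exact_mod_cast hN)).two_dvd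
  obtain ⟨k, hk⟩ := hpodd
  obtain ⟨m, hm⟩ := IsCoprime.mul_dvd ⟨-k, 1, by linear_combination hk⟩ h₂ hps
  exact ⟨s, m, hm⟩

theorem exists_posDef_det_eq_one_apply_zero_zero {N : ℕ} (hN : N % 8 = 3) :
    ∃ A : Matrix (Fin 3) (Fin 3) ℤ, A.PosDef ∧ A.det = 1 ∧ A 0 0 = N := by
  obtain ⟨p, hp, hp₄, C, hC⟩ := exists_prime_mod_four_eq_one_dvd_two_mul_add_one hN
  have := Fact.mk hp
  obtain ⟨s, m, hsm⟩ := exists_sq_add_eq_two_mul_mul hp₄ (Nat.odd_iff.mpr (by omega))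
    (isSquare_neg_of_dvd_two_mul_add_one hp₄ hN ⟨C, hC⟩)
  have hC' : (N : ℤ) * C = 2 * p + 1 := by exact_mod_cast hC.symm
  -- `N * d ^ 2 + 1 = 2 * p * E`, so the determinant `E * (N * C - 1) - N * d ^ 2` is `1`.
  set d : ℤ := s * C
  set E : ℤ := m * N * C ^ 2 - 2 * p - 2
  have hA : (!![(N : ℤ), 1, 0; 1, C, d; 0, d, E]).IsHermitian := by
    ext i j
    fin_cases i <;> fin_cases j <;> rfl
  have hdet : (!![(N : ℤ), 1, 0; 1, C, d; 0, d, E]).det = 1 := by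
    rw [det_fin_three]
    simp [d, E]
    linear_combination (E + N * C + 2 * p + 1) * hC' - N * C ^ 2 * hsm
  refine ⟨_, posDef_fin_three hA ?_ ?_ (by rw [hdet]; exact one_pos), hdet, rfl⟩
  · simp
    omega
  · simp [hC']
    exact_mod_cast hp.pos

theorem exists_sq_add_sq_add_sq_of_mod_eight_eq_three {N : ℕ} (hN : N % 8 = 3) :
    ∃ x y z : ℤ, (N : ℤ) = x ^ 2 + y ^ 2 + z ^ 2 := by
  obtain ⟨A, hA, hdet, hA₀₀⟩ := exists_posDef_det_eq_one_apply_zero_zero hN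
  obtain ⟨x, y, z, h⟩ := exists_sq_add_sq_add_sq_of_det_eq_one A hA hdet (Pi.single 0 1)
  exact ⟨x, y, z, by rw [← hA₀₀, ← h]; simp⟩

lemma two_mul_tri (k : ℤ) : 2 * tri k = k ^ 2 + k := by
  rw [tri, Int.mul_ediv_cancel' (Int.even_mul_succ_self k).two_dvd]
  ring

lemma odd_of_eight_mul_add_three_eq {n a b c : ℤ} (h : 8 * n + 3 = a ^ 2 + b ^ 2 + c ^ 2) :
    Odd a := by
  refine Int.not_even_iff_odd.mp fun ⟨j, hj⟩ ↦ ?_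
  have h₈ := congrArg (Int.cast : ℤ → ZMod 8) h
  push_cast [hj, show (8 : ZMod 8) = 0 from rfl, zero_mul, zero_add] at h₈
  revert h₈
  generalize (j : ZMod 8) = u
  generalize (b : ZMod 8) = v
  generalize (c : ZMod 8) = w
  revert u v w
  decide

lemma exists_four_mul_sq_add_two_mul_tri_add_tri_of_modEq {n a b c : ℤ}
    (h : 8 * n + 3 = a ^ 2 + b ^ 2 + c ^ 2) (hab : a ≡ b [ZMOD 8]) :
    ∃ x y z : ℤ, n = 4 * x ^ 2 + 2 * tri y + tri z := by
  obtain ⟨j, rfl⟩ := odd_of_eight_mul_add_three_eq h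
  obtain ⟨z, rfl⟩ :=
    odd_of_eight_mul_add_three_eq (n := n) (a := c) (b := 2 * j + 1) (c := b)
      (by linear_combination h)
  obtain ⟨k, hk⟩ := hab.dvd
  obtain rfl : b = 2 * j + 1 + 8 * k := by linear_combination hk
  refine ⟨k, j + 2 * k, z, ?_⟩
  have h₈ : 8 * n = 8 * (4 * k ^ 2 + 2 * tri (j + 2 * k) + tri z) := by
    linear_combination h - 8 * two_mul_tri (j + 2 * k) - 4 * two_mul_tri z
  omega

lemma exists_four_mul_sq_add_two_mul_tri_add_tri {n a b c : ℤ}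
    (h : 8 * n + 3 = a ^ 2 + b ^ 2 + c ^ 2) :
    ∃ x y z : ℤ, n = 4 * x ^ 2 + 2 * tri y + tri z := by
  have key : ∀ u v w : ZMod 8, u ^ 2 + v ^ 2 + w ^ 2 = 3 →
      u = v ∨ u = -v ∨ u = w ∨ u = -w ∨ v = w ∨ v = -w := by decide
  have h₈ := congrArg (Int.cast : ℤ → ZMod 8) h
  push_cast [show (8 : ZMod 8) = 0 from rfl, zero_mul, zero_add] at h₈
  have modEq {u v : ℤ} (huv : (u : ZMod 8) = v) : u ≡ v [ZMOD 8] :=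
    (ZMod.intCast_eq_intCast_iff _ _ _).mp huv
  rcases key _ _ _ h₈.symm with h' | h' | h' | h' | h' | h'
  · exact exists_four_mul_sq_add_two_mul_tri_add_tri_of_modEq h (modEq h')
  · exact exists_four_mul_sq_add_two_mul_tri_add_tri_of_modEq (n := n) (a := a) (b := -b) (c := c)
      (by linear_combination h) (modEq (by push_cast; exact h'))
  · exact exists_four_mul_sq_add_two_mul_tri_add_tri_of_modEq (n := n) (a := a) (b := c) (c := b)
      (by linear_combination h) (modEq h')
  · exact exists_four_mul_sq_add_two_mul_tri_add_tri_of_modEq (n := n) (a := a) (b := -c) (c := b)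
      (by linear_combination h) (modEq (by push_cast; exact h'))
  · exact exists_four_mul_sq_add_two_mul_tri_add_tri_of_modEq (n := n) (a := b) (b := c) (c := a)
      (by linear_combination h) (modEq h')
  · exact exists_four_mul_sq_add_two_mul_tri_add_tri_of_modEq (n := n) (a := b) (b := -c) (c := a)
      (by linear_combination h) (modEq (by push_cast; exact h'))

theorem stmt4 (n : ℕ) : ∃ x y z : ℤ, (n : ℤ) = 4 * x ^ 2 + 2 * tri y + tri z := by
  obtain ⟨a, b, c, h⟩ := exists_sq_add_sq_add_sq_of_mod_eight_eq_three (N := 8 * n + 3) (by omega)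
  push_cast at h
  exact exists_four_mul_sq_add_two_mul_tri_add_tri h
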